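/- arXiv:1506.08518 — 2 statements merged into one kernel-verified Lean document; each statement's English description precedes it below -/
import Mathlib

section
/- For a fixed word w and fixed Parikh vector P, there is at most one abelian run with period P starting at each position of w; equivalently, distinct abelian runs with period P have distinct starting positions (and distinct ending positions). -/
open scoped BigOperators

variable {α : Type*} [DecidableEq α] [Fintype α]

/-- Parikh vector of a word: counts of each letter. -/
def parikh (w : List α) (a : α) : ℕ := w.count a

/-- Componentwise containment of Parikh vectors. -/
def PSub (P Q : α → ℕ) : Prop := ∀ a, P a ≤ Q a

/-- Strict containment of Parikh vectors. -/
def PSSub (P Q : α → ℕ) : Prop := PSub P Q ∧ P ≠ Q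

/-- Norm of a Parikh vector: sum of its components. -/
def pnorm (P : α → ℕ) : ℕ := ∑ a, P a

/-- Fragment w[i..j] (both endpoints included). -/
def frag (w : List α) (i j : ℕ) : List α := (w.drop i).take (j + 1 - i)

/-- `IsPF P w k u` : w = u 0 ++ u 1 ++ ⋯ ++ u k is a periodic factorization of w
with respect to P: the cores u 1, …, u (k-1) have Parikh vector P and the head u 0
and tail u k have Parikh vector strictly contained in P. -/
def IsPF (P : α → ℕ) (w : List α) (k : ℕ) (u : ℕ → List α) : Prop :=
  1 ≤ k ∧ w = ((List.range (k + 1)).map u).flatten ∧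
  (∀ i, 0 < i → i < k → parikh (u i) = P) ∧
  PSSub (parikh (u 0)) P ∧ PSSub (parikh (u k)) P

/-- Fragment w[i..j] has abelian period P. -/
def HasPeriod (P : α → ℕ) (w : List α) (i j : ℕ) : Prop :=
  ∃ m u, IsPF P (frag w i j) m u

/-- Fragment w[i..j] has abelian period P anchored at k : there is a periodic
factorization whose cores start (within w) at positions ≡ k (mod |P|). -/
def HasAnchPeriod (P : α → ℕ) (w : List α) (i j k : ℕ) : Prop :=
  ∃ m u, IsPF P (frag w i j) m u ∧ (i + (u 0).length) % pnorm P = k % pnorm P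

/-- Fragment w[i..j] is periodic with period P anchored at k
(factorization with at least two cores). -/
def PeriodicAnch (P : α → ℕ) (w : List α) (i j k : ℕ) : Prop :=
  ∃ m u, 3 ≤ m ∧ IsPF P (frag w i j) m u ∧
    (i + (u 0).length) % pnorm P = k % pnorm P

/-- Fragment w[i..j] is periodic with period P (at least two cores, any anchor). -/
def APeriodic (P : α → ℕ) (w : List α) (i j : ℕ) : Prop :=
  ∃ m u, 3 ≤ m ∧ IsPF P (frag w i j) m u

/-- k-anchored abelian run with period P. -/
def AnchoredRun (P : α → ℕ) (w : List α) (i j k : ℕ) : Prop :=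
  i ≤ j ∧ j < w.length ∧ PeriodicAnch P w i j k ∧
  (i = 0 ∨ ¬ PeriodicAnch P w (i - 1) j k) ∧
  (j + 1 = w.length ∨ ¬ PeriodicAnch P w i (j + 1) k)

/-- Abelian run with period P. -/
def AbelianRun (P : α → ℕ) (w : List α) (i j : ℕ) : Prop :=
  i ≤ j ∧ j < w.length ∧ APeriodic P w i j ∧
  (i = 0 ∨ ¬ APeriodic P w (i - 1) j) ∧
  (j + 1 = w.length ∨ ¬ APeriodic P w i (j + 1))

/-- B_i[k]: the starting position of the longest suffix of w[0..i] having abelian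
period P anchored at k (⊤ = ∞ if no such suffix exists). -/
noncomputable def Bfun (P : α → ℕ) (w : List α) (i k : ℕ) : ℕ∞ :=
  sInf {b : ℕ∞ | ∃ s : ℕ, b = (s : ℕ∞) ∧ s ≤ i + 1 ∧ HasAnchPeriod P w s i k}

/-!
If `x` is periodic with period `P` (at least two cores) and `x ++ [c]` is a prefix of a periodic
word `y`, then `x ++ [c]` is periodic. When `x ++ [c]` is at least as long as the head of `y` plus
two cores, a truncation of the factorization of `y` works. Otherwise `x ++ [c]` lies inside the head
and first two cores of `y`, so each letter occurs in it at most `3 P a` times; as `x` already has two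
full cores, the tail of `x` can absorb `c`, turning into a new core if its Parikh vector reaches `P`.
Hence a periodic fragment that is a proper prefix of another one extends by a letter, which a run
cannot; reversing words gives the same for suffixes.
-/

lemma length_eq_pnorm_parikh (l : List α) : l.length = pnorm (parikh l) := by
  unfold pnorm parikh
  induction l with
  | nil => simp
  | cons x t ih => simp [List.count_cons, ih, Finset.sum_add_distrib]

section Parikh

variable {P : α → ℕ} {l l' : List α}

lemma length_lt_pnorm_of_pssub (h : PSSub (parikh l) P) : l.length < pnorm P := by
  obtain ⟨a, ha⟩ : ∃ a, parikh l a < P a := by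
    by_contra! hc
    exact h.2 (funext fun a => le_antisymm (h.1 a) (hc a))
  rw [length_eq_pnorm_parikh]
  exact Finset.sum_lt_sum (fun b _ => h.1 b) ⟨a, Finset.mem_univ a, ha⟩

lemma pssub_of_psub_of_length_lt (h : PSub (parikh l) P) (hl : l.length < pnorm P) :
    PSSub (parikh l) P :=
  ⟨h, fun heq => (length_eq_pnorm_parikh l ▸ heq ▸ hl).false⟩

lemma pnorm_pos_of_pssub (h : PSSub (parikh l) P) : 0 < pnorm P :=
  (Nat.zero_le _).trans_lt (length_lt_pnorm_of_pssub h)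

omit [Fintype α] in
lemma PSub.of_sublist (h : PSub (parikh l') P) (hl : l.Sublist l') : PSub (parikh l) P :=
  fun a => (hl.count_le a).trans (h a)

end Parikh

section FlattenBlocks

variable {β : Type*}

def flattenBlocks (u : ℕ → List β) (n : ℕ) : List β := ((List.range n).map u).flatten

variable (u : ℕ → List β)

@[simp]
lemma flattenBlocks_zero : flattenBlocks u 0 = [] := rfl

lemma flattenBlocks_succ (n : ℕ) : flattenBlocks u (n + 1) = flattenBlocks u n ++ u n := by
  simp [flattenBlocks, List.range_succ]

lemma flattenBlocks_succ' (n : ℕ) :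
    flattenBlocks u (n + 1) = u 0 ++ flattenBlocks (fun t => u (t + 1)) n := by
  simp [flattenBlocks, List.range_succ_eq_map, Function.comp_def]

lemma flattenBlocks_congr {u v : ℕ → List β} {n : ℕ} (h : ∀ t < n, u t = v t) :
    flattenBlocks u n = flattenBlocks v n := by
  induction n with
  | zero => rfl
  | succ n ih =>
    rw [flattenBlocks_succ, flattenBlocks_succ, ih fun t ht => h t (by omega), h n (by omega)]

lemma flattenBlocks_prefix {s n : ℕ} (h : s ≤ n) : flattenBlocks u s <+: flattenBlocks u n := by
  induction n, h using Nat.le_induction with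
  | base => exact List.prefix_refl _
  | succ n _ ih => exact ih.trans (flattenBlocks_succ u n ▸ List.prefix_append _ _)

lemma reverse_flattenBlocks (n : ℕ) :
    (flattenBlocks u n).reverse = flattenBlocks (fun t => (u (n - 1 - t)).reverse) n := by
  induction n generalizing u with
  | zero => rfl
  | succ n ih =>
    rw [flattenBlocks_succ, List.reverse_append, ih, flattenBlocks_succ']
    congr 2
    funext t
    congr 2
    omega

end FlattenBlocks

section Frag

variable {β : Type*} (w : List β)

lemma frag_succ_right {i j : ℕ} (hij : i ≤ j + 1) (hj : j + 1 < w.length) :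
    frag w i (j + 1) = frag w i j ++ [w[j + 1]] := by
  unfold frag
  rw [show j + 1 + 1 - i = j + 1 - i + 1 by omega, List.take_add_one, List.getElem?_drop,
    show i + (j + 1 - i) = j + 1 by omega, List.getElem?_eq_getElem hj]
  rfl

lemma frag_eq_cons {i j : ℕ} (hij : i ≤ j) (hi : i < w.length) :
    frag w i j = w[i] :: frag w (i + 1) j := by
  unfold frag
  rw [List.drop_eq_getElem_cons hi, show j + 1 - i = j + 1 - (i + 1) + 1 by omega,
    List.take_succ_cons]

lemma frag_prefix_frag (i : ℕ) {j j' : ℕ} (h : j ≤ j') : frag w i j <+: frag w i j' := by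
  unfold frag
  rw [show j + 1 - i = min (j + 1 - i) (j' + 1 - i) by omega, ← List.take_take]
  exact List.take_prefix _ _

lemma frag_suffix_frag {i i' : ℕ} (j : ℕ) (h : i' ≤ i) : frag w i j <:+ frag w i' j := by
  have : frag w i j = (frag w i' j).drop (i - i') := by
    unfold frag
    rw [List.drop_take, List.drop_drop, show i' + (i - i') = i by omega,
      show j + 1 - i' - (i - i') = j + 1 - i by omega]
  exact this ▸ List.drop_suffix _ _

end Frag

omit [Fintype α] in
lemma parikh_reverse (l : List α) : parikh l.reverse = parikh l :=
  funext fun _ => List.count_reverse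

def AbelianPeriodic (P : α → ℕ) (x : List α) : Prop := ∃ m u, 3 ≤ m ∧ IsPF P x m u

omit [Fintype α] in
lemma abelianPeriodic_flattenBlocks_append {P : α → ℕ} {u : ℕ → List α} {k : ℕ} {T : List α}
    (hk : 2 ≤ k) (hhead : PSSub (parikh (u 0)) P) (hcore : ∀ t, 0 < t → t ≤ k → parikh (u t) = P)
    (hT : PSSub (parikh T) P) : AbelianPeriodic P (flattenBlocks u (k + 1) ++ T) := by
  refine ⟨k + 1, fun t => if t ≤ k then u t else T, by omega, by omega, ?_, ?_, ?_, ?_⟩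
  · change _ = flattenBlocks _ (k + 1 + 1)
    rw [flattenBlocks_succ _ (k + 1),
      flattenBlocks_congr (v := u) (n := k + 1) fun t ht => if_pos (by omega)]
    simp
  · intro t h0 ht
    simpa [show t ≤ k by omega] using hcore t h0 (by omega)
  · simpa using hhead
  · simpa using hT

namespace IsPF

variable {P : α → ℕ} {x : List α} {m : ℕ} {u : ℕ → List α}

omit [Fintype α] in
lemma eq_flattenBlocks_append (hx : IsPF P x m u) : x = flattenBlocks u m ++ u m :=
  hx.2.1.trans (flattenBlocks_succ u m)

omit [Fintype α] in
lemma psub (hx : IsPF P x m u) {t : ℕ} (ht : t ≤ m) : PSub (parikh (u t)) P := by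
  rcases Nat.eq_zero_or_pos t with rfl | h0
  · exact hx.2.2.2.1.1
  rcases ht.lt_or_eq with hlt | rfl
  · exact fun a => (congrFun (hx.2.2.1 t h0 hlt) a).le
  · exact hx.2.2.2.2.1

lemma length_core (hx : IsPF P x m u) {t : ℕ} (h0 : 0 < t) (ht : t < m) :
    (u t).length = pnorm P := by
  rw [length_eq_pnorm_parikh, hx.2.2.1 t h0 ht]

lemma length_flattenBlocks (hx : IsPF P x m u) {t : ℕ} (ht : t < m) :
    (flattenBlocks u (t + 1)).length = (u 0).length + t * pnorm P := by
  induction t with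
  | zero => simp [flattenBlocks_succ]
  | succ t ih =>
    rw [flattenBlocks_succ, List.length_append, ih (by omega), hx.length_core (by omega) ht]
    ring

omit [Fintype α] in
lemma count_flattenBlocks (hx : IsPF P x m u) {t : ℕ} (ht : t < m) (a : α) :
    (flattenBlocks u (t + 1)).count a = (u 0).count a + t * P a := by
  induction t with
  | zero => simp [flattenBlocks_succ]
  | succ t ih =>
    rw [flattenBlocks_succ, List.count_append, ih (by omega),
      show (u (t + 1)).count a = P a from congrFun (hx.2.2.1 (t + 1) (by omega) ht) a]
    ring

lemma length_eq (hx : IsPF P x m u) :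
    x.length = (u 0).length + (m - 1) * pnorm P + (u m).length := by
  obtain ⟨k, rfl⟩ : ∃ k, m = k + 1 := ⟨m - 1, by have := hx.1; omega⟩
  rw [hx.eq_flattenBlocks_append, List.length_append, hx.length_flattenBlocks (by omega)]
  simp

omit [Fintype α] in
lemma count_eq (hx : IsPF P x m u) (a : α) :
    x.count a = (u 0).count a + (m - 1) * P a + (u m).count a := by
  obtain ⟨k, rfl⟩ : ∃ k, m = k + 1 := ⟨m - 1, by have := hx.1; omega⟩
  rw [hx.eq_flattenBlocks_append, List.count_append, hx.count_flattenBlocks (by omega)]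
  simp

lemma take_eq (hx : IsPF P x m u) {t r : ℕ} (ht : t < m) (hr : r ≤ (u (t + 1)).length) :
    x.take ((u 0).length + t * pnorm P + r) = flattenBlocks u (t + 1) ++ (u (t + 1)).take r := by
  obtain ⟨R, hR⟩ := flattenBlocks_prefix u (show t + 2 ≤ m + 1 by omega)
  have hsplit : x = flattenBlocks u (t + 1) ++ (u (t + 1) ++ R) := by
    rw [hx.2.1, ← List.append_assoc, ← flattenBlocks_succ, hR]
    rfl
  rw [hsplit, ← hx.length_flattenBlocks ht, List.take_length_add_append,
    List.take_append_of_le_length hr]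

omit [Fintype α] in
lemma reverse (hx : IsPF P x m u) : IsPF P x.reverse m (fun t => (u (m - t)).reverse) := by
  refine ⟨hx.1, ?_, fun t h0 ht => ?_, ?_, ?_⟩
  · rw [hx.2.1]
    exact reverse_flattenBlocks u (m + 1)
  · rw [parikh_reverse]
    exact hx.2.2.1 _ (by omega) (by omega)
  · simpa [parikh_reverse] using hx.2.2.2.2
  · simpa [parikh_reverse] using hx.2.2.2.1

lemma abelianPeriodic_take_of_lt (hx : IsPF P x m u) {k r : ℕ} (hk : 2 ≤ k) (hkm : k < m)
    (hr : r ≤ (u (k + 1)).length) (hrp : r < pnorm P) :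
    AbelianPeriodic P (x.take ((u 0).length + k * pnorm P + r)) := by
  rw [hx.take_eq hkm hr]
  refine abelianPeriodic_flattenBlocks_append hk hx.2.2.2.1
    (fun t h0 ht => hx.2.2.1 t h0 (by omega)) (pssub_of_psub_of_length_lt ?_ ?_)
  · exact (hx.psub hkm).of_sublist (List.take_sublist _ _)
  · exact (List.length_take_le _ _).trans_lt hrp

lemma abelianPeriodic_take (hx : IsPF P x m u) (hm : 3 ≤ m) {n : ℕ}
    (hn : (u 0).length + 2 * pnorm P ≤ n) (hnx : n ≤ x.length) :
    AbelianPeriodic P (x.take n) := by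
  have hp := pnorm_pos_of_pssub hx.2.2.2.1
  have hlen := hx.length_eq
  have htail := length_lt_pnorm_of_pssub hx.2.2.2.2
  set b := (u 0).length
  set p := pnorm P
  by_cases hlast : b + (m - 1) * p ≤ n
  · have := hx.abelianPeriodic_take_of_lt (k := m - 1) (r := n - (b + (m - 1) * p))
      (by omega) (by omega) (by rw [Nat.sub_add_cancel (by omega)]; omega) (by omega)
    rwa [show b + (m - 1) * p + (n - (b + (m - 1) * p)) = n by omega] at this
  · set k := (n - b) / p
    have hdiv : p * k + (n - b) % p = n - b := Nat.div_add_mod (n - b) p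
    have hmod : (n - b) % p < p := Nat.mod_lt (n - b) hp
    have hk : 2 ≤ k := (Nat.le_div_iff_mul_le hp).2 (by omega)
    have hkm : k + 1 < m := by
      by_contra hkm
      have : (m - 1) * p ≤ k * p := Nat.mul_le_mul_right _ (by omega)
      rw [mul_comm] at hdiv
      omega
    have := hx.abelianPeriodic_take_of_lt hk (by omega)
      (by rw [hx.length_core (by omega) hkm]; omega) hmod
    rwa [show b + k * p + (n - b) % p = n by rw [mul_comm] at hdiv; omega] at this

lemma abelianPeriodic_append_singleton (hx : IsPF P x m u) (hm : 3 ≤ m) {c : α}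
    (hc : PSub (parikh (u m ++ [c])) P) : AbelianPeriodic P (x ++ [c]) := by
  obtain ⟨k, rfl⟩ : ∃ k, m = k + 1 := ⟨m - 1, by omega⟩
  rw [hx.eq_flattenBlocks_append, List.append_assoc]
  by_cases hfull : parikh (u (k + 1) ++ [c]) = P
  · have hnil : PSSub (parikh ([] : List α)) P :=
      pssub_of_psub_of_length_lt (fun _ => Nat.zero_le _) (pnorm_pos_of_pssub hx.2.2.2.1)
    have := abelianPeriodic_flattenBlocks_append
      (u := Function.update u (k + 1) (u (k + 1) ++ [c])) (k := k + 1) (by omega)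
      (by simpa using hx.2.2.2.1) (fun t h0 ht => ?_) hnil
    · rwa [flattenBlocks_succ, List.append_nil, Function.update_self,
        flattenBlocks_congr (v := u) fun t ht => Function.update_of_ne (by omega) _ _] at this
    · rcases ht.lt_or_eq with ht | rfl
      · simpa [show t ≠ k + 1 by omega] using hx.2.2.1 t h0 ht
      · simpa using hfull
  · exact abelianPeriodic_flattenBlocks_append (by omega) hx.2.2.2.1
      (fun t h0 ht => hx.2.2.1 t h0 (by omega)) ⟨hc, hfull⟩

end IsPF

section Periodic

variable {P : α → ℕ}

omit [Fintype α] in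
lemma AbelianPeriodic.reverse {x : List α} (hx : AbelianPeriodic P x) :
    AbelianPeriodic P x.reverse :=
  let ⟨m, _, hm, hu⟩ := hx
  ⟨m, _, hm, hu.reverse⟩

theorem AbelianPeriodic.append_singleton_of_prefix {x y : List α} {c : α}
    (hx : AbelianPeriodic P x) (hy : AbelianPeriodic P y) (hpre : x ++ [c] <+: y) :
    AbelianPeriodic P (x ++ [c]) := by
  obtain ⟨m, u, hm, hu⟩ := hx
  obtain ⟨m', v, hm', hv⟩ := hy
  by_cases hlong : (v 0).length + 2 * pnorm P ≤ (x ++ [c]).length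
  · rw [List.prefix_iff_eq_take.mp hpre]
    exact hv.abelianPeriodic_take hm' hlong hpre.length_le
  · refine hu.abelianPeriodic_append_singleton hm fun a => ?_
    have hshort : x ++ [c] <+: flattenBlocks v 3 :=
      List.prefix_of_prefix_length_le hpre
        ((flattenBlocks_prefix v (show 3 ≤ m' + 1 by omega)).trans (hv.2.1 ▸ List.prefix_refl _))
        (by rw [hv.length_flattenBlocks (t := 2) (by omega)]; omega)
    have hcount := hshort.sublist.count_le a
    rw [hv.count_flattenBlocks (t := 2) (by omega), List.count_append, hu.count_eq] at hcount
    have hhead : (v 0).count a ≤ P a := hv.2.2.2.1.1 a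
    have hcores : 2 * P a ≤ (m - 1) * P a := Nat.mul_le_mul_right _ (by omega)
    change (u m ++ [c]).count a ≤ P a
    rw [List.count_append]
    omega

theorem AbelianPeriodic.cons_of_suffix {x y : List α} {c : α}
    (hx : AbelianPeriodic P x) (hy : AbelianPeriodic P y) (hsuf : c :: x <:+ y) :
    AbelianPeriodic P (c :: x) := by
  have := hx.reverse.append_singleton_of_prefix hy.reverse
    (by simpa using List.reverse_prefix.2 hsuf)
  simpa using this.reverse

end Periodic

section Run

variable {P : α → ℕ} {w : List α}

lemma APeriodic.succ_right {i j j' : ℕ} (h : APeriodic P w i j) (h' : APeriodic P w i j')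
    (hij : i ≤ j) (hjj' : j < j') (hj' : j' < w.length) : APeriodic P w i (j + 1) := by
  have hsnoc := frag_succ_right w (by omega : i ≤ j + 1) (by omega : j + 1 < w.length)
  change AbelianPeriodic P _
  rw [hsnoc]
  exact AbelianPeriodic.append_singleton_of_prefix h h'
    (hsnoc ▸ frag_prefix_frag w i (show j + 1 ≤ j' by omega))

lemma APeriodic.pred_left {i i' j : ℕ} (h : APeriodic P w (i + 1) j) (h' : APeriodic P w i' j)
    (hi' : i' ≤ i) (hij : i ≤ j) (hj : j < w.length) : APeriodic P w i j := by
  have hcons := frag_eq_cons w hij (by omega)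
  change AbelianPeriodic P _
  rw [hcons]
  exact AbelianPeriodic.cons_of_suffix h h' (hcons ▸ frag_suffix_frag w j hi')

lemma AbelianRun.le_of_aPeriodic_right {i j j' : ℕ} (h : AbelianRun P w i j)
    (h' : APeriodic P w i j') (hj' : j' < w.length) : j' ≤ j := by
  obtain ⟨hij, -, hper, -, hmax⟩ := h
  by_contra! hlt
  rcases hmax with hend | hnot
  · omega
  · exact hnot (hper.succ_right h' hij hlt hj')

lemma AbelianRun.le_of_aPeriodic_left {i i' j : ℕ} (h : AbelianRun P w i j)
    (h' : APeriodic P w i' j) : i ≤ i' := by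
  obtain ⟨hij, hj, hper, hmax, -⟩ := h
  by_contra! hlt
  obtain ⟨i, rfl⟩ : ∃ k, i = k + 1 := ⟨i - 1, by omega⟩
  rcases hmax with hstart | hnot
  · omega
  · exact hnot (hper.pred_left h' (by omega) (by omega) hj)

end Run

/-- For a fixed Parikh vector P, there is at most one abelian run with period P
starting (and ending) at each position of w. -/
theorem abelianRun_unique_start (P : α → ℕ) (w : List α) (i j i' j' : ℕ)
    (h : AbelianRun P w i j) (h' : AbelianRun P w i' j') :
    (i = i' → j = j') ∧ (j = j' → i = i') := by
  obtain ⟨-, hj, hper, -, -⟩ := id h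
  obtain ⟨-, hj', hper', -, -⟩ := id h'
  refine ⟨fun hi => ?_, fun hjj => ?_⟩
  · subst hi
    exact le_antisymm (h'.le_of_aPeriodic_right hper hj) (h.le_of_aPeriodic_right hper' hj')
  · subst hjj
    exact le_antisymm (h.le_of_aPeriodic_left hper') (h'.le_of_aPeriodic_left hper)
end

section
/- Let i-p < k ≤ i. A fragment w[b..i-1] is a k-anchored abelian run with period P (of norm p) if and only if B_{i-1}[k] = b, b ≤ k - 2p, and B_i[k] > b. -/
open scoped BigOperators

variable {α : Type*} [DecidableEq α] [Fintype α]

/-!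
A fragment `w[s, E)` has abelian period `P` anchored at `k` exactly when it splits into a head,
`d` cores with Parikh vector `P` whose start positions are `≡ k (mod p)`, and a tail, head and
tail being shorter than `p = |P|`. If `k ≤ E < k + p`, the last core must end exactly at `k`.
Moving the start of the fragment to the right keeps this core end and only drops cores at the
front, so from any anchored start `s`, every `b` with `s ≤ b ≤ k - 2p` is the start of a
fragment with at least two cores. Hence left maximality of `w[b..i-1]` says that `b` is the
leftmost anchored start for the end `i - 1`, i.e. `B_{i-1}[k] = b`, and right maximality says
that no start `≤ b` works for the end `i`, i.e. `B_i[k] > b`.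
-/

theorem Nat.exists_le_add_mul_lt_add {p c s : ℕ} (hp : 0 < p) (hc : c < s + p) :
    ∃ j, s ≤ c + p * j ∧ c + p * j < s + p :=
  ⟨(s + p - 1 - c) / p, by
    have := Nat.div_add_mod (s + p - 1 - c) p
    have := Nat.mod_lt (s + p - 1 - c) hp
    omega⟩

namespace List

variable {β : Type*}

theorem extract_append_extract (w : List β) {a b c : ℕ} (hab : a ≤ b) (hbc : b ≤ c) :
    w.extract a b ++ w.extract b c = w.extract a c := by
  have hdrop : w.drop b = (w.drop a).drop (b - a) := by rw [drop_drop]; congr 1; omega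
  simp only [extract_eq_take_drop, hdrop, ← take_add]
  congr 1; omega

theorem extract_extract (w : List β) (s E a b : ℕ) :
    (w.extract s E).extract a b = w.extract (s + a) (min (s + b) E) := by
  simp only [extract_eq_take_drop, drop_take, drop_drop, take_take]
  congr 1; omega

theorem extract_eq_extract_add_length (w : List β) (a b : ℕ) :
    w.extract a b = w.extract a (a + (w.extract a b).length) := by
  simp only [extract_eq_take_drop, take_eq_take_iff, length_take, length_drop]
  omega

theorem length_extract_of_le {w : List β} {a b : ℕ} (h : b ≤ w.length) :
    (w.extract a b).length = b - a := by
  simp only [extract_eq_take_drop, length_take, length_drop]; omega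

theorem extract_suffix_extract (w : List β) {a a' : ℕ} (h : a ≤ a') (b : ℕ) :
    w.extract a' b <:+ w.extract a b := by
  have : w.extract a' b = (w.extract a b).drop (a' - a) := by
    simp only [extract_eq_take_drop, drop_take, drop_drop, Nat.add_sub_cancel' h]
    congr 1; omega
  rw [this]; exact drop_suffix _ _

theorem flatten_map_range_extract (w : List β) {q : ℕ → ℕ} (hq : Monotone q) (n : ℕ) :
    ((range n).map fun t => w.extract (q t) (q (t + 1))).flatten = w.extract (q 0) (q n) := by
  induction n with
  | zero => simp
  | succ n ih =>
    rw [range_succ, map_append, flatten_append, ih, map_singleton, flatten_singleton,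
      extract_append_extract w (hq n.zero_le) (hq n.le_succ)]

theorem extract_flatten_map_range (u : ℕ → List β) {n t : ℕ} (ht : t < n) :
    ((range n).map u).flatten.extract ((range t).map u).flatten.length
      (((range t).map u).flatten.length + (u t).length) = u t := by
  obtain ⟨r, rfl⟩ := Nat.exists_eq_add_of_lt ht
  rw [show t + r + 1 = (t + 1) + r by omega, range_add, range_succ]
  simp

theorem eq_extract_of_flatten_eq {w : List β} {u : ℕ → List β} {n s E : ℕ}
    (h : ((range n).map u).flatten = w.extract s E) {t : ℕ} (ht : t < n) :
    u t = w.extract (s + ((range t).map u).flatten.length)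
      (s + ((range t).map u).flatten.length + (u t).length) := by
  have key := extract_flatten_map_range u ht
  rw [h, extract_extract] at key
  conv_lhs => rw [← key, extract_eq_extract_add_length, key]

end List

theorem parikh_le_of_suffix {β : Type*} [DecidableEq β] {x y : List β} (h : x <:+ y) (a : β) :
    parikh x a ≤ parikh y a :=
  h.count_le a

theorem pnorm_parikh (v : List α) : pnorm (parikh v) = v.length := by
  induction v with
  | nil => simp [pnorm, parikh]
  | cons x v ih =>
    simp only [pnorm, parikh, List.count_cons, Finset.sum_add_distrib] at *
    simp [ih]

theorem length_eq_pnorm_of_parikh_eq {P : α → ℕ} {v : List α} (h : parikh v = P) :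
    v.length = pnorm P := by
  rw [← pnorm_parikh v, h]

theorem PSSub.length_lt {P : α → ℕ} {v : List α} (h : PSSub (parikh v) P) :
    v.length < pnorm P := by
  rw [← pnorm_parikh v]
  obtain ⟨a, ha⟩ := Function.ne_iff.mp h.2
  exact Finset.sum_lt_sum (fun a _ => h.1 a) ⟨a, Finset.mem_univ a, lt_of_le_of_ne (h.1 a) ha⟩

theorem pssub_parikh_of_le {P : α → ℕ} {v : List α} (hle : ∀ a, parikh v a ≤ P a)
    (hlen : v.length < pnorm P) : PSSub (parikh v) P :=
  ⟨hle, fun h => hlen.ne (length_eq_pnorm_of_parikh_eq h)⟩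

/-- `w[s, E)` is the head `w[s, c)`, the `d` cores `w[c + p t, c + p (t + 1))` with Parikh
vector `P`, and the tail `w[c + p d, E)`, where `p = pnorm P`. -/
structure PeriodicLayout (P : α → ℕ) (w : List α) (s E c d : ℕ) : Prop where
  le_coreStart : s ≤ c
  coreEnd_le : c + pnorm P * d ≤ E
  head : PSSub (parikh (w.extract s c)) P
  core : ∀ t < d, parikh (w.extract (c + pnorm P * t) (c + pnorm P * t + pnorm P)) = P
  tail : PSSub (parikh (w.extract (c + pnorm P * d) E)) P

theorem IsPF.periodicLayout {P : α → ℕ} {w : List α} {s E m : ℕ} {u : ℕ → List α}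
    (h : IsPF P (w.extract s E) m u) (hE : E ≤ w.length) (hsE : s ≤ E) :
    PeriodicLayout P w s E (s + (u 0).length) (m - 1) := by
  obtain ⟨hm, hflat, hcore, hhead, htail⟩ := h
  have hcore_length : ∀ t, 0 < t → t < m → (u t).length = pnorm P := fun t ht htm =>
    length_eq_pnorm_of_parikh_eq (hcore t ht htm)
  set L : ℕ → ℕ := fun t => ((List.range t).map u).flatten.length
  have hu : ∀ t ≤ m, u t = w.extract (s + L t) (s + L t + (u t).length) := fun t ht =>
    List.eq_extract_of_flatten_eq hflat.symm (by omega)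
  have hL_succ : ∀ t, L (t + 1) = L t + (u t).length := by simp [L, List.range_succ]
  have hL : ∀ t < m, L (t + 1) = (u 0).length + pnorm P * t := by
    intro t ht
    induction t with
    | zero => simp [L]
    | succ t ih => rw [hL_succ, ih (by omega), hcore_length _ (by omega) ht]; ring
  have hLm : L m = (u 0).length + pnorm P * (m - 1) := by
    simpa [show m - 1 + 1 = m by omega] using hL (m - 1) (by omega)
  have hLend : L (m + 1) = E - s := by
    simp only [L]; rw [← hflat, List.length_extract_of_le hE]
  have hLm_succ := hL_succ m
  refine ⟨by omega, by omega, ?_, fun t ht => ?_, ?_⟩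
  · have hu0 := hu 0 (by omega)
    simp only [L, List.range_zero, List.map_nil, List.flatten_nil, List.length_nil,
      Nat.add_zero] at hu0
    rwa [← hu0]
  · have hut := hu (t + 1) (by omega)
    rw [hL t (by omega), hcore_length (t + 1) (by omega) (by omega), ← add_assoc] at hut
    rw [← hut]
    exact hcore _ (by omega) (by omega)
  · have hum := hu m le_rfl
    rw [hLm, ← add_assoc, show s + (u 0).length + pnorm P * (m - 1) + (u m).length = E by omega]
      at hum
    rwa [← hum]

namespace PeriodicLayout

variable {P : α → ℕ} {w : List α} {s E c d : ℕ}

theorem pnorm_pos (h : PeriodicLayout P w s E c d) : 0 < pnorm P :=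
  Nat.zero_lt_of_lt h.head.length_lt

theorem coreStart_lt (h : PeriodicLayout P w s E c d) (hE : E ≤ w.length) :
    c < s + pnorm P := by
  have := h.head.length_lt
  rw [List.length_extract_of_le (by have := h.coreEnd_le; omega)] at this
  have := h.le_coreStart
  omega

theorem lt_coreEnd_add (h : PeriodicLayout P w s E c d) (hE : E ≤ w.length) :
    E < c + pnorm P * d + pnorm P := by
  have := h.tail.length_lt
  rw [List.length_extract_of_le hE] at this
  have := h.coreEnd_le
  omega

theorem isPF (h : PeriodicLayout P w s E c d) (hE : E ≤ w.length) :
    ∃ u, IsPF P (w.extract s E) (d + 1) u ∧ s + (u 0).length = c := by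
  set p := pnorm P
  let u : ℕ → List α := fun t =>
    if t = 0 then w.extract s c
    else if t ≤ d then w.extract (c + p * (t - 1)) (c + p * (t - 1) + p)
    else w.extract (c + p * d) E
  have hcores : ((List.range d).map fun t => u (t + 1)).flatten = w.extract c (c + p * d) := by
    have hq : Monotone fun t => c + p * t := fun _ _ hab =>
      Nat.add_le_add_left (Nat.mul_le_mul_left _ hab) _
    have hcore_eq : ∀ t ∈ List.range d, u (t + 1) = w.extract (c + p * t) (c + p * (t + 1)) := by
      intro t ht
      simp only [List.mem_range] at ht
      simp [u, show t + 1 ≤ d by omega, Nat.mul_succ, add_assoc]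
    rw [List.map_congr_left hcore_eq, List.flatten_map_range_extract w hq d, Nat.mul_zero,
      Nat.add_zero]
  have hflat : ((List.range (d + 2)).map u).flatten = w.extract s E := by
    rw [List.range_succ, List.range_succ_eq_map, List.map_append, List.flatten_append]
    simp only [List.map_cons, List.map_map, List.flatten_cons, Function.comp_def,
      Nat.succ_eq_add_one, hcores, List.map_nil, List.flatten_nil, List.append_nil]
    simp only [u, ↓reduceIte, show ¬d + 1 ≤ d by omega, Nat.add_one_ne_zero]
    rw [List.extract_append_extract w h.le_coreStart (by omega),
      List.extract_append_extract w (by have := h.le_coreStart; omega) h.coreEnd_le]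
  refine ⟨u, ⟨by omega, hflat.symm, fun t ht htd => ?_, h.head, ?_⟩, ?_⟩
  · simpa [u, ht.ne', show t ≤ d by omega] using h.core (t - 1) (by omega)
  · simpa [u] using h.tail
  · simp only [u, ↓reduceIte]
    have := h.le_coreStart
    rw [List.length_extract_of_le (by have := h.coreEnd_le; omega)]
    omega

theorem restrict (h : PeriodicLayout P w s E c d) (hE : E ≤ w.length) {s' : ℕ} (hs : s ≤ s')
    (hs' : s' ≤ c + pnorm P * d) :
    ∃ j ≤ d, PeriodicLayout P w s' E (c + pnorm P * j) (d - j) := by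
  have hcs' : c < s' + pnorm P := by have := h.coreStart_lt hE; omega
  obtain ⟨j, hj₁, hj₂⟩ := Nat.exists_le_add_mul_lt_add h.pnorm_pos hcs'
  have hjd : j ≤ d := by
    by_contra! hdj
    have := Nat.mul_le_mul_left (pnorm P) hdj
    rw [Nat.mul_succ] at this
    omega
  have hmul : pnorm P * j + pnorm P * (d - j) = pnorm P * d := by
    rw [← Nat.mul_add, Nat.add_sub_cancel' hjd]
  have hhead_le : ∀ a, parikh (w.extract s' (c + pnorm P * j)) a ≤ P a := by
    intro a
    cases j with
    | zero =>
      rw [Nat.mul_zero, Nat.add_zero]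
      exact (parikh_le_of_suffix (w.extract_suffix_extract hs c) a).trans (h.head.1 a)
    | succ j =>
      rw [Nat.mul_succ, ← add_assoc] at hj₂ ⊢
      exact (parikh_le_of_suffix (w.extract_suffix_extract (by omega) _) a).trans_eq
        (congrFun (h.core j (by omega)) a)
  have hhead_length : (w.extract s' (c + pnorm P * j)).length < pnorm P := by
    simp only [List.extract_eq_take_drop]
    exact (List.length_take_le _ _).trans_lt (by omega)
  refine ⟨j, hjd, hj₁, by have := h.coreEnd_le; omega, pssub_parikh_of_le hhead_le hhead_length,
    fun t ht => ?_, ?_⟩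
  · rw [add_assoc c, ← Nat.mul_add]
    exact h.core _ (by omega)
  · rw [add_assoc c, hmul]
    exact h.tail

theorem le_coreEnd (h : PeriodicLayout P w s E c d) (hE : E ≤ w.length) {k : ℕ}
    (hc : c ≡ k [MOD pnorm P]) (hk : k ≤ E) : k ≤ c + pnorm P * d :=
  (hc.symm.trans (Nat.add_mul_mod_self_left c _ d).symm).le_of_lt_add
    (by have := h.lt_coreEnd_add hE; omega)

theorem coreEnd_eq (h : PeriodicLayout P w s E c d) (hE : E ≤ w.length) {k : ℕ}
    (hc : c ≡ k [MOD pnorm P]) (hk : k ≤ E) (hEk : E < k + pnorm P) : c + pnorm P * d = k :=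
  le_antisymm (Nat.ModEq.le_of_lt_add ((Nat.add_mul_mod_self_left c _ d).trans hc)
    (by have := h.coreEnd_le; omega)) (h.le_coreEnd hE hc hk)

end PeriodicLayout

section Anchored

variable {P : α → ℕ} {w : List α} {s j k : ℕ}

theorem HasAnchPeriod.exists_periodicLayout (h : HasAnchPeriod P w s j k) (hj : j < w.length)
    (hs : s ≤ j + 1) : ∃ c d, PeriodicLayout P w s (j + 1) c d ∧ c ≡ k [MOD pnorm P] :=
  let ⟨_, _, hpf, hmod⟩ := h
  ⟨_, _, hpf.periodicLayout hj hs, hmod⟩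

theorem PeriodicAnch.hasAnchPeriod (h : PeriodicAnch P w s j k) : HasAnchPeriod P w s j k :=
  let ⟨m, u, _, hpf, hmod⟩ := h
  ⟨m, u, hpf, hmod⟩

theorem periodicAnch_iff (hj : j < w.length) (hs : s ≤ j + 1) :
    PeriodicAnch P w s j k ↔
      ∃ c d, PeriodicLayout P w s (j + 1) c d ∧ 2 ≤ d ∧ c ≡ k [MOD pnorm P] := by
  constructor
  · rintro ⟨m, u, hm, hpf, hmod⟩
    exact ⟨_, _, hpf.periodicLayout hj hs, by omega, hmod⟩
  · rintro ⟨c, d, h, hd, hc⟩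
    obtain ⟨u, hpf, hu⟩ := h.isPF hj
    exact ⟨d + 1, u, by omega, hpf, hu ▸ hc⟩

theorem periodicAnch_of_hasAnchPeriod (h : HasAnchPeriod P w s j k) (hj : j < w.length)
    (hs : s ≤ j + 1) (hk : k ≤ j + 1) {b : ℕ} (hsb : s ≤ b) (hb : b + 2 * pnorm P ≤ k) :
    PeriodicAnch P w b j k := by
  obtain ⟨c, d, hl, hc⟩ := h.exists_periodicLayout hj hs
  have hke := hl.le_coreEnd hj hc hk
  obtain ⟨i, hid, hl'⟩ := hl.restrict hj hsb (by omega)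
  have hcb := hl'.coreStart_lt hj
  have hmul : pnorm P * i + pnorm P * (d - i) = pnorm P * d := by
    rw [← Nat.mul_add, Nat.add_sub_cancel' hid]
  have htwo : pnorm P * 1 < pnorm P * (d - i) := by omega
  exact (periodicAnch_iff hj (by omega)).2 ⟨_, _, hl', Nat.lt_of_mul_lt_mul_left htwo,
    (Nat.add_mul_mod_self_left c _ i).trans hc⟩

theorem PeriodicAnch.add_two_mul_pnorm_le (h : PeriodicAnch P w s j k) (hj : j < w.length)
    (hs : s ≤ j + 1) (hk : k ≤ j + 1) (hjk : j + 1 < k + pnorm P) : s + 2 * pnorm P ≤ k := by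
  obtain ⟨c, d, hl, hd, hc⟩ := (periodicAnch_iff hj hs).1 h
  have hend := hl.coreEnd_eq hj hc hk hjk
  have hsc := hl.le_coreStart
  have := Nat.mul_le_mul_left (pnorm P) hd
  omega

theorem Bfun_le_coe_iff {b : ℕ} :
    Bfun P w j k ≤ b ↔ ∃ s ≤ b, s ≤ j + 1 ∧ HasAnchPeriod P w s j k := by
  unfold Bfun
  constructor
  · intro h
    have hne : {x : ℕ∞ | ∃ s : ℕ, x = s ∧ s ≤ j + 1 ∧ HasAnchPeriod P w s j k}.Nonempty := by
      by_contra hempty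
      rw [Set.not_nonempty_iff_eq_empty] at hempty
      simp [hempty] at h
    obtain ⟨s, hs, hsj, hH⟩ := csInf_mem hne
    exact ⟨s, by exact_mod_cast hs ▸ h, hsj, hH⟩
  · rintro ⟨s, hsb, hsj, hH⟩
    exact le_trans (sInf_le ⟨s, rfl, hsj, hH⟩) (by exact_mod_cast hsb)

theorem coe_le_Bfun_iff {b : ℕ} :
    (b : ℕ∞) ≤ Bfun P w j k ↔ ∀ s, s ≤ j + 1 → HasAnchPeriod P w s j k → b ≤ s := by
  unfold Bfun
  rw [le_sInf_iff]
  constructor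
  · intro h s hs hH
    exact_mod_cast h _ ⟨s, rfl, hs, hH⟩
  · rintro h _ ⟨s, rfl, hs, hH⟩
    exact_mod_cast h s hs hH

end Anchored

/-- For i-p < k ≤ i, the fragment w[b..i-1] is a k-anchored abelian run with
period P iff B_{i-1}[k] = b ≤ k - 2p and B_i[k] > b. -/
theorem anchoredRun_iff_B (P : α → ℕ) (w : List α) (i k b : ℕ)
    (hi1 : 1 ≤ i) (hi2 : i < w.length)
    (hk1 : i < k + pnorm P) (hk2 : k ≤ i) :
    AnchoredRun P w b (i - 1) k ↔
      (Bfun P w (i - 1) k = (b : ℕ∞) ∧ b + 2 * pnorm P ≤ k ∧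
        (b : ℕ∞) < Bfun P w i k) := by
  have hi : i - 1 + 1 = i := by omega
  rw [le_antisymm_iff, Bfun_le_coe_iff, coe_le_Bfun_iff, ← not_le, Bfun_le_coe_iff]
  constructor
  · rintro ⟨hbi, -, hper, hleft, hright⟩
    have hb := hper.add_two_mul_pnorm_le (by omega) (by omega) (by omega) (by omega)
    refine ⟨⟨⟨b, le_rfl, by omega, hper.hasAnchPeriod⟩, fun s hs hH => ?_⟩, hb, ?_⟩
    · by_contra! hsb
      exact hleft.resolve_left (by omega)
        (periodicAnch_of_hasAnchPeriod hH (by omega) hs (by omega) (by omega) (by omega))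
    · rintro ⟨s, hsb, hs, hH⟩
      exact hright.resolve_left (by omega)
        (hi ▸ periodicAnch_of_hasAnchPeriod hH hi2 hs (by omega) hsb hb)
  · rintro ⟨⟨⟨s, hsb, hs, hH⟩, hleast⟩, hb, hnot⟩
    refine ⟨by omega, by omega,
      periodicAnch_of_hasAnchPeriod hH (by omega) hs (by omega) hsb hb, ?_, Or.inr ?_⟩
    · refine b.eq_zero_or_pos.imp id fun hb0 hper => ?_
      have := hleast (b - 1) (by omega) hper.hasAnchPeriod
      omega
    · exact fun hper => hnot ⟨b, le_rfl, by omega, (hi ▸ hper).hasAnchPeriod⟩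
end
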